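/- arXiv:2103.14875 — 2 statements merged into one kernel-verified Lean document; each statement's English description precedes it below -/
import Mathlib

section
/- Let n ≥ 1. Let λ_1 = 1 and λ_2, …, λ_n be real numbers with 1, λ_2, …, λ_n linearly independent over ℚ, and let θ_1, θ_2 be real numbers such that both families π, θ_1, λ_2θ_1, …, λ_nθ_1 and π, θ_2, λ_2θ_2, …, λ_nθ_2 are linearly independent over ℚ. Let Θ ∈ M(n, 2; ℝ) be the matrix with entries Θ_{ij} = λ_i θ_j. Then the orbit { [Θ·A] : A ∈ SL(2, ℤ) } is dense in M(n, 2; 𝕋) = 𝕋^{2n}. (Direct, Ratner-free proof of the main density theorem in genus one for this class of representations.) -/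
/-!
Write `a = [λθ₁]` and `b = [λθ₂]` for the columns of `[Θ]`. The hypothesis on `π, λθ₁` says that
no nontrivial character of `𝕋ⁿ` is trivial at a nonzero multiple `j • a`. Hence, by Weyl's
equidistribution theorem (approximate uniformly by trigonometric polynomials, whose Birkhoff
averages are geometric sums), the multiples of every `j • a` are dense (Kronecker).

In the closure `S` of the orbit of `(a, b)`, the matrix `(1 k; 0 1)` sends `(x, y)` to
`(x, y + k • x)`, so `S` contains the whole fibre `{x} × 𝕋ⁿ` once it meets it at a point `x` with
dense multiples. This gives `{a} × 𝕋ⁿ ⊆ S`, then `((j + 1) • a, j • a) ∈ S` via `(1 0; 1 1)`,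
hence `{(j + 1) • a} × 𝕋ⁿ ⊆ S` for every `j`; and the points `(j + 1) • a` are dense.
-/

open Set Filter Topology MeasureTheory Real Matrix

lemma tendsto_inv_mul_geom_sum {𝕜 : Type*} [RCLike 𝕜] {z : 𝕜} (hz : ‖z‖ ≤ 1) (hz1 : z ≠ 1) :
    Tendsto (fun N : ℕ => (N : 𝕜)⁻¹ * ∑ k ∈ Finset.range N, z ^ k) atTop (𝓝 0) := by
  have hbound : ∀ N : ℕ, ‖∑ k ∈ Finset.range N, z ^ k‖ ≤ 2 / ‖z - 1‖ := by
    intro N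
    rw [geom_sum_eq hz1, norm_div]
    gcongr
    calc ‖z ^ N - 1‖ ≤ ‖z ^ N‖ + ‖(1 : 𝕜)‖ := norm_sub_le _ _
      _ ≤ 1 + 1 := by gcongr <;> simp [pow_le_one₀ (norm_nonneg z) hz]
      _ = 2 := by norm_num
  refine squeeze_zero_norm (fun N => ?_) (tendsto_const_nhds.div_atTop tendsto_natCast_atTop_atTop :
    Tendsto (fun N : ℕ => 2 / ‖z - 1‖ / N) atTop (𝓝 0))
  rw [norm_mul, norm_inv, RCLike.norm_natCast, inv_mul_eq_div]
  exact div_le_div_of_nonneg_right (hbound N) N.cast_nonneg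

section Birkhoff

variable (𝕜 : Type*) [RCLike 𝕜] {α E : Type*} [NormedAddCommGroup E] [NormedSpace 𝕜 E]

lemma norm_birkhoffAverage_le (f : α → α) {g : α → E} {C : ℝ} (hg : ∀ x, ‖g x‖ ≤ C)
    (n : ℕ) (x : α) : ‖birkhoffAverage 𝕜 f g n x‖ ≤ C := by
  rcases eq_or_ne n 0 with rfl | hn
  · simpa using (norm_nonneg _).trans (hg x)
  have hn' : (0 : ℝ) < n := by positivity
  rw [birkhoffAverage, norm_smul, norm_inv, RCLike.norm_natCast, inv_mul_le_iff₀ hn']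
  calc ‖birkhoffSum f g n x‖ ≤ ∑ k ∈ Finset.range n, ‖g (f^[k] x)‖ := norm_sum_le _ _
    _ ≤ n * C := (Finset.sum_le_sum fun k _ => hg (f^[k] x)).trans_eq (by simp)

theorem isClosed_setOf_tendsto_birkhoffAverage_integral [TopologicalSpace α] [CompactSpace α]
    [MeasurableSpace α] [BorelSpace α] (μ : Measure α) [IsFiniteMeasure μ] (f : α → α) (x : α) :
    IsClosed {g : C(α, 𝕜) | Tendsto (birkhoffAverage 𝕜 f g · x) atTop (𝓝 (∫ y, g y ∂μ))} := by
  have hlip : ∀ n, LipschitzWith 1 fun g : C(α, 𝕜) => birkhoffAverage 𝕜 f g n x := by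
    refine fun n => LipschitzWith.of_dist_le_mul fun g h => ?_
    have hsub := congrFun (congrFun (birkhoffAverage_sub (R := 𝕜) (f := f) (g := g) (g' := h)) n) x
    rw [Pi.sub_apply, Pi.sub_apply] at hsub
    rw [NNReal.coe_one, one_mul, dist_eq_norm, dist_eq_norm, ← hsub, ← ContinuousMap.coe_sub]
    exact norm_birkhoffAverage_le 𝕜 f (fun y => (g - h).norm_coe_le_norm y) n x
  have hint : (fun g : C(α, 𝕜) => ∫ y, g y ∂μ) = fun g => ∫ y, ContinuousMap.toLp 1 μ ℝ g y ∂μ :=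
    funext fun g => integral_congr_ae (ContinuousMap.coeFn_toLp μ g).symm
  refine (LipschitzWith.uniformEquicontinuous _ 1 hlip).equicontinuous.isClosed_setOfPred_tendsto ?_
  rw [hint]
  exact continuous_integral.comp (ContinuousMap.toLp 1 μ ℝ).continuous

end Birkhoff

namespace UnitAddTorus

variable {d : Type*} [Fintype d]

lemma mFourier_apply_add (m : d → ℤ) (x y : UnitAddTorus d) :
    mFourier m (x + y) = mFourier m x * mFourier m y := by
  simp only [mFourier, ContinuousMap.coe_mk, Pi.add_apply, fourier_apply, smul_add,
    AddCircle.toCircle_add, Circle.coe_mul, Finset.prod_mul_distrib]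

lemma mFourier_apply_nsmul (m : d → ℤ) (k : ℕ) (x : UnitAddTorus d) :
    mFourier m (k • x) = mFourier m x ^ k := by
  induction k with
  | zero => simp [mFourier]
  | succ k ih => rw [succ_nsmul, mFourier_apply_add, ih, pow_succ]

lemma mFourier_nsmul (m : d → ℤ) (k : ℕ) (x : UnitAddTorus d) :
    mFourier (k • m) x = mFourier m x ^ k := by
  induction k with
  | zero => simp [mFourier_zero]
  | succ k ih => rw [succ_nsmul, mFourier_add, ih, pow_succ]

lemma norm_mFourier_apply (m : d → ℤ) (x : UnitAddTorus d) : ‖mFourier m x‖ = 1 := by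
  simp [mFourier, norm_prod, Circle.norm_coe]

lemma integral_mFourier [DecidableEq d] (m : d → ℤ) :
    ∫ x, mFourier m x = if m = 0 then 1 else 0 := by
  split_ifs with hm
  · simp [hm, mFourier_zero, measureReal_def, volume_pi, Measure.pi_univ, AddCircle.measure_univ]
  obtain ⟨i, hi⟩ := Function.ne_iff.mp hm
  rw [mFourier, ContinuousMap.coe_mk, integral_fintype_prod_volume_eq_prod]
  refine Finset.prod_eq_zero (Finset.mem_univ i) ?_
  have hcoeff := congr_fun (fourierCoeff_fourier (T := 1) (m i)) 0
  simp only [fourierCoeff, AddCircle.integral_haarAddCircle, Pi.single_apply] at hcoeff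
  simpa [(Ne.symm hi : (0 : ℤ) ≠ m i)] using hcoeff

lemma mFourier_coe_apply (m : d → ℤ) (t : d → ℝ) :
    mFourier m (fun i => (t i : UnitAddCircle)) =
      Complex.exp (2 * π * Complex.I * ∑ i, m i * t i) := by
  simp only [mFourier, ContinuousMap.coe_mk, fourier_coe_apply, ← Complex.exp_sum]
  push_cast
  simp only [div_one, Finset.mul_sum, mul_assoc]

variable {x : UnitAddTorus d}

lemma birkhoffAverage_mFourier (m : d → ℤ) (N : ℕ) (y : UnitAddTorus d) :
    birkhoffAverage ℂ (x + ·) (mFourier m) N y =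
      ((N : ℂ)⁻¹ * ∑ k ∈ Finset.range N, mFourier m x ^ k) * mFourier m y := by
  simp only [birkhoffAverage, birkhoffSum, add_left_iterate, mFourier_apply_add,
    mFourier_apply_nsmul, smul_eq_mul, Finset.sum_mul, mul_assoc]

lemma tendsto_birkhoffAverage_mFourier (hx : ∀ m : d → ℤ, m ≠ 0 → mFourier m x ≠ 1) (m : d → ℤ)
    (y : UnitAddTorus d) :
    Tendsto (birkhoffAverage ℂ (x + ·) (mFourier m) · y) atTop (𝓝 (∫ z, mFourier m z)) := by
  classical
  rw [integral_mFourier]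
  split_ifs with hm
  · subst hm
    refine tendsto_const_nhds.congr' ((eventually_ne_atTop 0).mono fun N hN => ?_)
    dsimp only
    rw [birkhoffAverage_of_comp_eq (R := ℂ) (by simp [mFourier_zero]) (Nat.cast_ne_zero.2 hN),
      mFourier_zero]
    rfl
  · simp_rw [birkhoffAverage_mFourier]
    simpa using (tendsto_inv_mul_geom_sum (norm_mFourier_apply m x).le (hx m hm)).mul_const
      (mFourier m y)

lemma tendsto_birkhoffAverage_of_mem_span (hx : ∀ m : d → ℤ, m ≠ 0 → mFourier m x ≠ 1)
    (y : UnitAddTorus d) {P : C(UnitAddTorus d, ℂ)} (hP : P ∈ Submodule.span ℂ (range mFourier)) :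
    Tendsto (birkhoffAverage ℂ (x + ·) P · y) atTop (𝓝 (∫ z, P z)) := by
  induction hP using Submodule.span_induction with
  | mem _ h =>
    obtain ⟨m, rfl⟩ := h
    exact tendsto_birkhoffAverage_mFourier hx m y
  | zero => simp [birkhoffAverage, birkhoffSum]
  | add P Q _ _ hP hQ =>
    have hint : ∀ g : C(UnitAddTorus d, ℂ), Integrable g :=
      fun g => g.continuous.integrable_of_hasCompactSupport (HasCompactSupport.of_compactSpace _)
    rw [ContinuousMap.coe_add, birkhoffAverage_add]
    simp only [Pi.add_apply]
    rw [integral_add (hint P) (hint Q)]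
    exact hP.add hQ
  | smul c P _ hP =>
    simp only [ContinuousMap.coe_smul, Pi.smul_apply, integral_smul]
    convert hP.const_smul c using 1
    ext N
    simp [birkhoffAverage, birkhoffSum, Finset.mul_sum, mul_left_comm]

theorem tendsto_birkhoffAverage_integral (hx : ∀ m : d → ℤ, m ≠ 0 → mFourier m x ≠ 1)
    (g : C(UnitAddTorus d, ℂ)) (y : UnitAddTorus d) :
    Tendsto (birkhoffAverage ℂ (x + ·) g · y) atTop (𝓝 (∫ z, g z)) := by
  have hspan := closure_minimal (fun P hP => tendsto_birkhoffAverage_of_mem_span hx y hP)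
    (isClosed_setOf_tendsto_birkhoffAverage_integral ℂ volume (x + ·) y)
  rw [← Submodule.topologicalClosure_coe, span_mFourier_closure_eq_top] at hspan
  exact hspan Submodule.mem_top

theorem denseRange_nsmul (hx : ∀ m : d → ℤ, m ≠ 0 → mFourier m x ≠ 1) :
    DenseRange fun k : ℕ => k • x := by
  -- An Urysohn function vanishing on the orbit closure has zero averages but positive integral.
  by_contra hdense
  obtain ⟨y, hy⟩ : ∃ y, y ∉ closure (range fun k : ℕ => k • x) := by
    simpa [DenseRange, Dense] using hdense
  obtain ⟨g, hg0, hg1, hg01⟩ := exists_continuous_zero_one_of_isClosed isClosed_closure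
    isClosed_singleton (disjoint_singleton_right.2 hy)
  have hpos : 0 < ∫ z, g z :=
    g.continuous.integral_pos_of_hasCompactSupport_nonneg_nonzero
      (HasCompactSupport.of_compactSpace _) (fun z => (hg01 z).1) (x := y) (by simp [hg1 rfl])
  set gC : C(UnitAddTorus d, ℂ) := ⟨fun z => (g z : ℂ), by fun_prop⟩
  have hzero : ∀ N, birkhoffAverage ℂ (x + ·) gC N 0 = 0 := by
    intro N
    simp [gC, birkhoffAverage, birkhoffSum, hg0 (subset_closure (mem_range_self _))]
  have hlim := tendsto_nhds_unique (tendsto_birkhoffAverage_integral hx gC 0)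
    (by simp only [hzero]; exact tendsto_const_nhds)
  rw [show (∫ z, gC z) = ((∫ z, g z : ℝ) : ℂ) from integral_ofReal] at hlim
  exact hpos.ne' (by exact_mod_cast hlim)

end UnitAddTorus


lemma sum_intCast_mul_ne_two_pi_mul {n : ℕ} {v : Fin n → ℝ}
    (hv : LinearIndependent ℚ (Fin.cons π v : Fin (n + 1) → ℝ)) {m : Fin n → ℤ} (hm : m ≠ 0)
    (N : ℤ) : ∑ i, (m i : ℝ) * v i ≠ 2 * π * N := by
  intro h
  obtain ⟨i, hi⟩ := Function.ne_iff.mp hm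
  have hrel := Fintype.linearIndependent_iff.1 hv (Fin.cons (-2 * N : ℚ) fun i => (m i : ℚ)) (by
    rw [Fin.sum_univ_succ]
    simp only [Fin.cons_zero, Fin.cons_succ, Rat.smul_def]
    push_cast
    rw [h]
    ring)
  exact hi (by simpa using hrel i.succ)

lemma mFourier_coe_div_two_pi_ne_one {n : ℕ} {v : Fin n → ℝ}
    (hv : LinearIndependent ℚ (Fin.cons π v : Fin (n + 1) → ℝ)) {m : Fin n → ℤ} (hm : m ≠ 0) :
    UnitAddTorus.mFourier m (fun i => ((v i / (2 * π) : ℝ) : UnitAddCircle)) ≠ 1 := by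
  rw [UnitAddTorus.mFourier_coe_apply, Ne, Complex.exp_eq_one_iff]
  rintro ⟨N, hN⟩
  refine sum_intCast_mul_ne_two_pi_mul hv hm N (Complex.ofReal_injective ?_)
  have hπ : (π : ℂ) ≠ 0 := by exact_mod_cast pi_ne_zero
  apply mul_left_cancel₀ Complex.I_ne_zero
  push_cast at hN ⊢
  have hS : 2 * π * ∑ i, (m i : ℂ) * (v i / (2 * π)) = ∑ i, (m i : ℂ) * v i := by
    rw [Finset.mul_sum]
    refine Finset.sum_congr rfl fun i _ => ?_
    field_simp
  linear_combination hN - Complex.I * hS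

theorem denseRange_nsmul_nsmul_coe {n : ℕ} {v : Fin n → ℝ}
    (hv : LinearIndependent ℚ (Fin.cons π v : Fin (n + 1) → ℝ)) {j : ℕ} (hj : 0 < j) :
    DenseRange fun k : ℕ => k • j • fun i => (v i : AddCircle (2 * π)) := by
  let e := Homeomorph.piCongrRight fun _ : Fin n =>
    AddCircle.homeomorphAddCircle (1 : ℝ) (2 * π) one_ne_zero (by positivity)
  let ξ : UnitAddTorus (Fin n) := fun i => ((v i / (2 * π) : ℝ) : UnitAddCircle)
  have hξ : DenseRange fun k : ℕ => k • j • ξ := UnitAddTorus.denseRange_nsmul fun m hm => by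
    rw [UnitAddTorus.mFourier_apply_nsmul, ← UnitAddTorus.mFourier_nsmul]
    exact mFourier_coe_div_two_pi_ne_one hv (smul_ne_zero hj.ne' hm)
  convert e.surjective.denseRange.comp hξ e.continuous using 1
  ext k i
  simp only [Function.comp_apply, e, ξ, Homeomorph.piCongrRight_apply, Pi.smul_apply,
    ← AddCircle.coe_nsmul, AddCircle.homeomorphAddCircle_apply_mk]
  congr 1
  simp only [nsmul_eq_mul]
  field_simp

section SL2

variable {G : Type*} [AddCommGroup G]

def vecMulInt {m n : Type*} [Fintype m] (X : m → G) (A : Matrix m n ℤ) : n → G :=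
  fun j => ∑ l, A l j • X l

lemma vecMulInt_vecMulInt {m n p : Type*} [Fintype m] [Fintype n] (X : m → G)
    (A : Matrix m n ℤ) (B : Matrix n p ℤ) :
    vecMulInt (vecMulInt X A) B = vecMulInt X (A * B) := by
  ext j
  simp only [vecMulInt, Matrix.mul_apply, Finset.smul_sum, Finset.sum_smul, smul_smul]
  rw [Finset.sum_comm]
  simp_rw [mul_comm]

@[simp]
lemma vecMulInt_one {m : Type*} [Fintype m] [DecidableEq m] (X : m → G) : vecMulInt X 1 = X := by
  ext j
  simp [vecMulInt, Matrix.one_apply, ite_smul]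

lemma vecMulInt_upper (x y : G) (k : ℤ) : vecMulInt ![x, y] !![1, k; 0, 1] = ![x, k • x + y] := by
  ext j; fin_cases j <;> simp [vecMulInt, Fin.sum_univ_two]

lemma vecMulInt_lower (x y : G) (k : ℤ) : vecMulInt ![x, y] !![1, 0; k, 1] = ![x + k • y, y] := by
  ext j; fin_cases j <;> simp [vecMulInt, Fin.sum_univ_two]

variable [TopologicalSpace G] [IsTopologicalAddGroup G]

lemma continuous_vecMulInt {m n : Type*} [Fintype m] (A : Matrix m n ℤ) :
    Continuous fun X : m → G => vecMulInt X A := by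
  unfold vecMulInt
  fun_prop

def sl2Orbit (c : Fin 2 → G) : Set (Fin 2 → G) :=
  {X | ∃ A : Matrix (Fin 2) (Fin 2) ℤ, A.det = 1 ∧ X = vecMulInt c A}

lemma vecMulInt_mem_closure_sl2Orbit {c X : Fin 2 → G} (hX : X ∈ closure (sl2Orbit c))
    {A : Matrix (Fin 2) (Fin 2) ℤ} (hA : A.det = 1) :
    vecMulInt X A ∈ closure (sl2Orbit c) := by
  refine closure_mono ?_ (image_closure_subset_closure_image (continuous_vecMulInt A) ⟨X, hX, rfl⟩)
  rintro - ⟨-, ⟨B, hB, rfl⟩, rfl⟩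
  exact ⟨B * A, by rw [det_mul, hA, hB, mul_one], vecMulInt_vecMulInt c B A⟩

lemma mem_closure_sl2Orbit_of_denseRange {c : Fin 2 → G} {x y₀ : G}
    (h : ![x, y₀] ∈ closure (sl2Orbit c)) (hx : DenseRange fun k : ℕ => k • x) (y : G) :
    ![x, y] ∈ closure (sl2Orbit c) := by
  have hclosed : IsClosed {y | ![x, y] ∈ closure (sl2Orbit c)} :=
    isClosed_closure.preimage (by fun_prop)
  have hdense : DenseRange fun k : ℕ => k • x + y₀ :=
    (Homeomorph.addRight y₀).surjective.denseRange.comp hx (continuous_add_const y₀)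
  refine hdense.closure_range.symm.subset.trans (closure_minimal ?_ hclosed) (mem_univ y)
  rintro - ⟨k, rfl⟩
  simpa [vecMulInt_upper] using vecMulInt_mem_closure_sl2Orbit h (A := !![1, (k : ℤ); 0, 1])
    (by simp [det_fin_two_of])

theorem dense_sl2Orbit {c : Fin 2 → G}
    (hc : ∀ j : ℕ, 0 < j → DenseRange fun k : ℕ => k • j • c 0) : Dense (sl2Orbit c) := by
  have hc0 : ∀ y, ![c 0, y] ∈ closure (sl2Orbit c) := by
    refine mem_closure_sl2Orbit_of_denseRange (y₀ := c 1) (subset_closure ?_)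
      (by simpa using hc 1 one_pos)
    exact ⟨1, det_one, by rw [vecMulInt_one]; ext i; fin_cases i <;> rfl⟩
  have hmul : ∀ (j : ℕ) y, ![(j + 1) • c 0, y] ∈ closure (sl2Orbit c) := by
    intro j
    refine mem_closure_sl2Orbit_of_denseRange (y₀ := j • c 0) ?_ (hc (j + 1) j.succ_pos)
    simpa [vecMulInt_lower, succ_nsmul'] using vecMulInt_mem_closure_sl2Orbit (hc0 (j • c 0))
      (A := !![1, 0; 1, 1]) (by simp [det_fin_two_of])
  have hR : DenseRange fun j : ℕ => (j + 1) • c 0 := by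
    have := (Homeomorph.addLeft (c 0)).surjective.denseRange.comp (by simpa using hc 1 one_pos)
      (continuous_const_add (c 0))
    simpa [Function.comp_def, succ_nsmul'] using this
  refine dense_iff_closure_eq.2 (eq_univ_of_univ_subset ?_)
  rw [← (hR.preimage (isOpenMap_eval 0)).closure_eq]
  refine closure_minimal ?_ isClosed_closure
  rintro X ⟨j, hj⟩
  have : X = ![(j + 1) • c 0, X 1] := by ext i; fin_cases i <;> simp [← hj]
  rw [this]; exact hmul j (X 1)

end SL2

theorem genus_one_orbit_dense_general {n : ℕ}
    (lam : Fin n → ℝ)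
    (θ1 θ2 : ℝ)
    (h1 : LinearIndependent ℚ
      (Fin.cons Real.pi (fun i : Fin n => lam i * θ1) : Fin (n + 1) → ℝ)) :
    Dense {X : Fin n → Fin 2 → AddCircle (2 * Real.pi) |
      ∃ A : Matrix (Fin 2) (Fin 2) ℤ, A.det = 1 ∧
        X = fun i j =>
          ((∑ l, (lam i * (![θ1, θ2] l)) * (A l j : ℝ) : ℝ) : AddCircle (2 * Real.pi))} := by
  -- `c l` is the `l`-th column of `[Θ]`, and `Function.swap` turns a matrix into its columns.
  let c : Fin 2 → Fin n → AddCircle (2 * π) := fun l i => ((lam i * ![θ1, θ2] l : ℝ) : _)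
  have hc : ∀ A : Matrix (Fin 2) (Fin 2) ℤ, Function.swap (vecMulInt c A) =
      fun i j => ((∑ l, (lam i * (![θ1, θ2] l)) * (A l j : ℝ) : ℝ) : AddCircle (2 * π)) := by
    intro A
    ext i j
    simp only [Function.swap, vecMulInt, c, Finset.sum_apply, Pi.smul_apply,
      mul_comm _ ((A _ _ : ℝ)), ← zsmul_eq_mul, QuotientAddGroup.mk_sum, AddCircle.coe_zsmul]
  have hswap : Function.Surjective (Function.swap : (Fin 2 → Fin n → AddCircle (2 * π)) → _) :=
    fun X => ⟨Function.swap X, rfl⟩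
  refine Dense.mono ?_ (hswap.denseRange.dense_image (by fun_prop)
    (dense_sl2Orbit (c := c) fun j hj => denseRange_nsmul_nsmul_coe h1 hj))
  rintro - ⟨-, ⟨A, hA, rfl⟩, rfl⟩
  exact ⟨A, hA, hc A⟩

/-- Genus-one density theorem (direct, Ratner-free case): for `Θ_{ij} = λ_i θ_j` with
`1, λ_2, …, λ_n` linearly independent over `ℚ` and each family
`π, θ_j, λ_2 θ_j, …, λ_n θ_j` (for `j = 1, 2`) linearly independent over `ℚ`,
the `SL(2,ℤ)`-orbit of `[Θ]` is dense in `M(n, 2; 𝕋)`. -/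
theorem genus_one_orbit_dense {n : ℕ} (hn : 1 ≤ n)
    (lam : Fin n → ℝ) (hlam1 : lam ⟨0, hn⟩ = 1) (hlam : LinearIndependent ℚ lam)
    (θ1 θ2 : ℝ)
    (h1 : LinearIndependent ℚ
      (Fin.cons Real.pi (fun i : Fin n => lam i * θ1) : Fin (n + 1) → ℝ))
    (h2 : LinearIndependent ℚ
      (Fin.cons Real.pi (fun i : Fin n => lam i * θ2) : Fin (n + 1) → ℝ)) :
    Dense {X : Fin n → Fin 2 → AddCircle (2 * Real.pi) |
      ∃ A : Matrix (Fin 2) (Fin 2) ℤ, A.det = 1 ∧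
        X = fun i j =>
          ((∑ l, (lam i * (![θ1, θ2] l)) * (A l j : ℝ) : ℝ) : AddCircle (2 * Real.pi))} :=
  genus_one_orbit_dense_general lam θ1 θ2 h1
end

section
/- Let g ≥ 2 and let Θ ∈ M(2, 2g; ℝ) be the matrix whose first row is (1, 1, 0, 0, …, 0) and whose second row is (0, 0, 1, 1, 0, …, 0). Then the image of the homomorphism ρ_Θ : ℤ^{2g} → 𝕋² is dense in 𝕋², yet for every k ∈ ℤ^{2g} the cyclic subgroup { m·ρ_Θ(k) : m ∈ ℤ } generated by ρ_Θ(k) is NOT dense in 𝕋². (A dense representation into 𝕋² for which no element — in particular, no simple closed curve — is sent to a generator of a dense cyclic subgroup.) -/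
open Matrix

/-- The `2 × 2g` matrix with first row `(1, 1, 0, …, 0)` and second row
`(0, 0, 1, 1, 0, …, 0)`. -/
def exMat (g : ℕ) : Matrix (Fin 2) (Fin (2*g)) ℝ :=
  Matrix.of fun i j =>
    if i = 0 then (if j.val = 0 ∨ j.val = 1 then 1 else 0)
    else (if j.val = 2 ∨ j.val = 3 then 1 else 0)

/-- The homomorphism `ρ_Θ : ℤ^{2g} → 𝕋²`, `k ↦ Θk mod 2π`, for `Θ = exMat g`. -/
noncomputable def rhoEx (g : ℕ) (k : Fin (2*g) → ℤ) : Fin 2 → AddCircle (2 * Real.pi) :=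
  fun i => ((∑ j, exMat g i j * (k j : ℝ) : ℝ) : AddCircle (2 * Real.pi))

/-!
Every coordinate of `ρ_Θ(k) = (k₀ + k₁, k₂ + k₃) mod 2π` is the class of an integer, and every
pair of integer classes is attained. Since `π` is irrational, `ℤ` is dense in `ℝ/2πℤ`, so the image
is dense. On the other hand an integer point `(a, b)` is annihilated by the nonzero continuous
character `x ↦ b x₀ - a x₁` (or `x ↦ x₀` if `a = b = 0`); its multiples therefore stay in the kernel,
a proper closed subgroup of `𝕋²`.
-/

theorem not_dense_range_zsmul_of_map_eq_zero {G H : Type*} [AddGroup G] [TopologicalSpace G]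
    [AddGroup H] [TopologicalSpace H] [T2Space H] {χ : G →+ H} (hχ : Continuous χ) (hne : χ ≠ 0)
    {v : G} (hv : χ v = 0) : ¬ Dense (Set.range fun m : ℤ => m • v) := by
  refine fun hd => hne (DFunLike.coe_injective (Continuous.ext_on hd hχ continuous_const ?_))
  rintro _ ⟨m, rfl⟩
  simp [map_zsmul, hv]

namespace AddCircle

variable {p : ℝ}

theorem denseRange_intCast_of_irrational (hp : Irrational p) :
    DenseRange (fun n : ℤ => ((n : ℝ) : AddCircle p)) := by
  have := denseRange_zsmul_coe_iff.2 (by rwa [one_div, irrational_inv_iff] : Irrational (1 / p))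
  simpa [← coe_zsmul] using this

variable [Fact (0 < p)]

theorem coe_half_period_ne_zero : ((p / 2 : ℝ) : AddCircle p) ≠ 0 := fun h => by
  simpa [h] using addOrderOf_period_div (p := p) two_pos

theorem not_dense_range_zsmul_of_relation {ι : Type*} [Fintype ι] {v : ι → AddCircle p}
    {c : ι → ℤ} (hc : c ≠ 0) (hv : ∑ i, c i • v i = 0) :
    ¬ Dense (Set.range fun m : ℤ => m • v) := by
  classical
  obtain ⟨i, hi⟩ := Function.ne_iff.1 hc
  set χ : (ι → AddCircle p) →+ AddCircle p := ∑ j, c j • Pi.evalAddMonoidHom _ j with hχ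
  have hχ_apply (x : ι → AddCircle p) : χ x = ∑ j, c j • x j := by simp [hχ]
  refine not_dense_range_zsmul_of_map_eq_zero (χ := χ) ?_ ?_ (by rw [hχ_apply, hv])
  · simp_rw [funext hχ_apply]
    fun_prop
  · intro h
    -- `χ` takes the value `p / 2` at `Pi.single i (p / 2 / c i)`
    have := DFunLike.congr_fun h (Pi.single i ((p / 2 / c i : ℝ) : AddCircle p))
    rw [hχ_apply] at this
    simp only [Pi.single_apply, smul_ite, smul_zero, Finset.sum_ite_eq', Finset.mem_univ,
      if_true] at this
    rw [← coe_zsmul, zsmul_eq_mul, mul_div_cancel₀ _ (Int.cast_ne_zero.2 hi)] at this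
    exact coe_half_period_ne_zero this

theorem not_dense_range_zsmul_intCast (z : Fin 2 → ℤ) :
    ¬ Dense (Set.range fun m : ℤ => m • fun i => ((z i : ℝ) : AddCircle p)) := by
  obtain ⟨c, hc, hcz⟩ : ∃ c : Fin 2 → ℤ, c ≠ 0 ∧ ∑ i, c i * z i = 0 := by
    by_cases hz : z = 0
    · exact ⟨![1, 0], by simp, by simp [hz]⟩
    · refine ⟨![z 1, -z 0], fun h => hz ?_, by simp [Fin.sum_univ_two, mul_comm]⟩
      ext i
      fin_cases i
      · simpa using congr_fun h 1
      · simpa using congr_fun h 0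
  refine not_dense_range_zsmul_of_relation hc ?_
  rw [Fin.sum_univ_two] at hcz ⊢
  rw [← coe_zsmul, ← coe_zsmul, ← coe_add, zsmul_eq_mul, zsmul_eq_mul]
  exact_mod_cast congrArg (fun n : ℤ => ((n : ℝ) : AddCircle p)) hcz

end AddCircle

theorem exMat_apply (g : ℕ) (i : Fin 2) (j : Fin (2 * g)) :
    exMat g i j = if j.val / 2 = i.val then 1 else 0 := by
  fin_cases i <;> simp [exMat] <;> exact if_congr (by omega) rfl rfl

theorem rhoEx_apply {g : ℕ} (hg : 2 ≤ g) (k : Fin (2 * g) → ℤ) (i : Fin 2) :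
    rhoEx g k i = ((k ⟨2 * i, by omega⟩ + k ⟨2 * i + 1, by omega⟩ : ℤ) : ℝ) := by
  unfold rhoEx
  congr 1
  rw [Finset.sum_eq_add (⟨2 * i, by omega⟩ : Fin (2 * g)) ⟨2 * i + 1, by omega⟩
    (by simp [Fin.ext_iff])
    (fun j _ hj => by simp [exMat_apply, Fin.ext_iff] at hj ⊢; omega)
    (by simp) (by simp)]
  simp [exMat_apply, show (2 * i.val + 1) / 2 = i.val by omega]

theorem range_intCast_subset_range_rhoEx {g : ℕ} (hg : 2 ≤ g) :
    Set.range (fun (n : Fin 2 → ℤ) i => ((n i : ℝ) : AddCircle (2 * Real.pi))) ⊆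
      Set.range (rhoEx g) := by
  rintro _ ⟨n, rfl⟩
  -- place `n 0` at index 0, `n 1` at index 2, and zeros elsewhere
  refine ⟨fun j => if h : j.val % 2 = 0 ∧ j.val / 2 < 2 then n ⟨j.val / 2, h.2⟩ else 0, ?_⟩
  funext i
  rw [rhoEx_apply hg]
  simp [i.is_le]

/-- A dense representation into `𝕋²` such that no element generates a dense cyclic
subgroup: `ρ_Θ` has dense image, yet for every `k ∈ ℤ^{2g}` the cyclic subgroup
generated by `ρ_Θ(k)` is not dense in `𝕋²`. -/
theorem dense_rep_without_dense_cyclic_generator {g : ℕ} (hg : 2 ≤ g) :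
    DenseRange (rhoEx g) ∧
      ∀ k : Fin (2*g) → ℤ, ¬ Dense (Set.range fun m : ℤ => m • rhoEx g k) := by
  have : Fact (0 < 2 * Real.pi) := ⟨Real.two_pi_pos⟩
  have h2pi : Irrational (2 * Real.pi) := by
    simpa using irrational_pi.natCast_mul (m := 2) two_ne_zero
  refine ⟨?_, fun k => ?_⟩
  · exact (DenseRange.piMap fun _ => AddCircle.denseRange_intCast_of_irrational h2pi).mono
      (range_intCast_subset_range_rhoEx hg)
  · rw [funext (rhoEx_apply hg k)]
    exact AddCircle.not_dense_range_zsmul_intCast _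
end
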